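/- Let f^in(ψ) = (γ_in/2)(ψ − ψ_in)² + β_in and f^out(ψ) = (γ_out/2)(ψ − ψ_out)² + β_out with γ_in, γ_out > 0, and suppose m, c, a, b ∈ ℝ satisfy the common tangent conditions f^in(a) = m a + c, γ_in (a − ψ_in) = m, f^out(b) = m b + c, γ_out (b − ψ_out) = m, with a < b. Let L > 0, x₀ ∈ (0, L), and ψ⁰_in ∈ ℝ with ψ⁰_in ≠ a, and set x_f = x₀ (b − ψ⁰_in)/(b − a); assume 0 < x_f < L. Then the total osmotic free energy strictly decreases from the initial state to the equilibrium state: x_f f^in(a) + (L − x_f) f^out(b) < x₀ f^in(ψ⁰_in) + (L − x₀) f^out(b). -/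

import Mathlib

/-!
Both densities touch the common tangent `ℓ(t) = m t + c` at the equilibrium concentrations, and
on `ℓ` the total energy of a two-phase state is `m · (total mass) + c L`; so once mass is
conserved, the equilibrium energy equals the energy of the initial state computed with `ℓ` in
place of `f^in`, `f^out`. Since `f^in` is a parabola tangent to `ℓ` at `a`, it exceeds `ℓ` at
`ψ⁰_in ≠ a` by exactly `(γ_in / 2) (ψ⁰_in - a)²`, which is the strict energy drop.
-/

/-- Interior osmotic free energy density `f^in(ψ) = (γ_in/2)(ψ - ψ_in)² + β_in`. -/
noncomputable def fIn (γin ψin βin : ℝ) (u : ℝ) : ℝ := γin / 2 * (u - ψin) ^ 2 + βin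

/-- Exterior osmotic free energy density `f^out(ψ) = (γ_out/2)(ψ - ψ_out)² + β_out`. -/
noncomputable def fOut (γout ψout βout : ℝ) (u : ℝ) : ℝ := γout / 2 * (u - ψout) ^ 2 + βout

/-- Phase `u` on `[0, x]`, phase `v` on `[x, L]`. -/
def twoPhaseMass (L x u v : ℝ) : ℝ := x * u + (L - x) * v

def twoPhaseEnergy (f g : ℝ → ℝ) (L x u v : ℝ) : ℝ := x * f u + (L - x) * g v

theorem twoPhaseEnergy_affine (m c L x u v : ℝ) :
    twoPhaseEnergy (fun t ↦ m * t + c) (fun t ↦ m * t + c) L x u v =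
      m * twoPhaseMass L x u v + c * L := by
  unfold twoPhaseEnergy twoPhaseMass
  ring

theorem twoPhaseMass_interface_eq {a b : ℝ} (hab : a ≠ b) (L x₀ ψ : ℝ) :
    twoPhaseMass L (x₀ * (b - ψ) / (b - a)) a b = twoPhaseMass L x₀ ψ b := by
  have hba : b - a ≠ 0 := sub_ne_zero.2 hab.symm
  unfold twoPhaseMass
  field_simp
  ring

theorem fIn_eq_tangent_add_sq {γ p β m c a : ℝ} (hval : fIn γ p β a = m * a + c)
    (hslope : γ * (a - p) = m) (u : ℝ) :
    fIn γ p β u = m * u + c + γ / 2 * (u - a) ^ 2 := by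
  unfold fIn at hval ⊢
  linear_combination hval + (u - a) * hslope

theorem osmotic_energy_strict_decrease_general
    (γin ψin βin γout ψout βout : ℝ) (hγin : 0 < γin)
    (m c a b : ℝ)
    (htan1 : fIn γin ψin βin a = m * a + c)
    (htan2 : γin * (a - ψin) = m)
    (htan3 : fOut γout ψout βout b = m * b + c)
    (hab : a < b)
    (L x₀ ψ0in : ℝ) (hx₀ : 0 < x₀)
    (hψ0 : ψ0in ≠ a)
    (xf : ℝ) (hxf : xf = x₀ * (b - ψ0in) / (b - a)) :
    xf * fIn γin ψin βin a + (L - xf) * fOut γout ψout βout b <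
      x₀ * fIn γin ψin βin ψ0in + (L - x₀) * fOut γout ψout βout b := by
  set ℓ : ℝ → ℝ := fun t ↦ m * t + c
  have hgap : 0 < γin / 2 * (ψ0in - a) ^ 2 := by
    have := sub_ne_zero.2 hψ0
    positivity
  calc xf * fIn γin ψin βin a + (L - xf) * fOut γout ψout βout b
      = twoPhaseEnergy ℓ ℓ L xf a b := by rw [htan1, htan3]; rfl
    _ = twoPhaseEnergy ℓ ℓ L x₀ ψ0in b := by
        simp only [ℓ, twoPhaseEnergy_affine, hxf, twoPhaseMass_interface_eq hab.ne]
    _ < x₀ * (ℓ ψ0in + γin / 2 * (ψ0in - a) ^ 2) + (L - x₀) * ℓ b := by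
        unfold twoPhaseEnergy
        gcongr
        exact lt_add_of_pos_right _ hgap
    _ = x₀ * fIn γin ψin βin ψ0in + (L - x₀) * fOut γout ψout βout b := by
        rw [fIn_eq_tangent_add_sq htan1 htan2, htan3]

/-- with a common tangent `t ↦ m t + c` of `f^in` (touching at
`a`) and `f^out` (touching at `b`), `a < b`, and the mass-conserving
equilibrium interface position `x_f = x₀ (b - ψ⁰_in)/(b - a)`, the total
osmotic free energy strictly decreases from the initial state (interface `x₀`,
interior concentration `ψ⁰_in ≠ a`, exterior concentration `b`) to the
equilibrium state (interface `x_f`, concentrations `a` and `b`). -/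
theorem osmotic_energy_strict_decrease
    (γin ψin βin γout ψout βout : ℝ) (hγin : 0 < γin) (hγout : 0 < γout)
    (m c a b : ℝ)
    (htan1 : fIn γin ψin βin a = m * a + c)
    (htan2 : γin * (a - ψin) = m)
    (htan3 : fOut γout ψout βout b = m * b + c)
    (htan4 : γout * (b - ψout) = m)
    (hab : a < b)
    (L x₀ ψ0in : ℝ) (hL : 0 < L) (hx₀ : 0 < x₀) (hx₀L : x₀ < L)
    (hψ0 : ψ0in ≠ a)
    (xf : ℝ) (hxf : xf = x₀ * (b - ψ0in) / (b - a))
    (hxf0 : 0 < xf) (hxfL : xf < L) :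
    xf * fIn γin ψin βin a + (L - xf) * fOut γout ψout βout b <
      x₀ * fIn γin ψin βin ψ0in + (L - x₀) * fOut γout ψout βout b :=
  osmotic_energy_strict_decrease_general γin ψin βin γout ψout βout hγin m c a b htan1 htan2 htan3
    hab L x₀ ψ0in hx₀ hψ0 xf hxf
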